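/- Let n ≥ 1 and let f : I^n → ℝ be differentiable at every point of I^n and not affine, i.e. there are no c ∈ ℝ^n and b ∈ ℝ with f(x) = ⟨c, x⟩ + b for all x ∈ I^n. Then the union of the affine tangent hyperplanes of the graph of f, the set {(a, f(x) + Df(x)(a − x)) : x ∈ I^n, a ∈ ℝ^n} ⊆ ℝ^n × ℝ, has nonempty interior. -/

import Mathlib

open Real

/-- The open cube (−π, π)^n in ℝ^n. -/
def Icube (n : ℕ) : Set (EuclideanSpace ℝ (Fin n)) :=
  {x | ∀ i, x i ∈ Set.Ioo (-π) π}

/-!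
Let `A` be the tangent plane of the graph at `0` and `x₁` a point with `f x₁ ≠ A x₁`. For a point
`a` of the cube, the tangent plane at `s • a` meets the vertical line over `a` at height
`T s = g s + (1 - s) g' s`, where `g s = f (s • a)`. Since `T` is the derivative of
`s ↦ 2 ∫₀ˢ g + (1 - s) g s`, Darboux's theorem shows that `T` takes every value between
`T 0 = A a` and `T 1 = f a`. So the tangent planes cover the open region between the graphs of `A`
and `f` over the cube, which contains a neighbourhood of a point above `x₁`.
-/

open Set

theorem isOpen_Icube (n : ℕ) : IsOpen (Icube n) := by
  have : Icube n = WithLp.ofLp ⁻¹' univ.pi fun _ => Ioo (-π) π := by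
    ext x; simp [Icube]
  rw [this]
  exact (isOpen_set_pi finite_univ fun _ _ => isOpen_Ioo).preimage (PiLp.continuous_ofLp 2 _)

theorem convex_Icube (n : ℕ) : Convex ℝ (Icube n) := by
  intro x hx y hy a b ha hb hab i
  simpa using convex_Ioo (-π) π (hx i) (hy i) ha hb hab

theorem zero_mem_Icube (n : ℕ) : (0 : EuclideanSpace ℝ (Fin n)) ∈ Icube n :=
  fun _ => ⟨by simp [pi_pos], by simp [pi_pos]⟩

theorem isOpen_regionBetween {α : Type*} [TopologicalSpace α] {u v : α → ℝ} {U : Set α}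
    (hU : IsOpen U) (hu : ContinuousOn u U) (hv : ContinuousOn v U) :
    IsOpen (regionBetween u v U) := by
  have hF : ContinuousOn (fun p : α × ℝ => (p.2 - u p.1, v p.1 - p.2)) (U ×ˢ univ) := by
    exact (continuousOn_snd.sub (hu.comp continuousOn_fst fun p hp => hp.1)).prodMk
      ((hv.comp continuousOn_fst fun p hp => hp.1).sub continuousOn_snd)
  convert hF.isOpen_inter_preimage (hU.prod isOpen_univ)
    ((isOpen_Ioi (a := 0)).prod (isOpen_Ioi (a := 0))) using 1
  ext p
  simp [regionBetween, sub_pos]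

theorem exists_ne_of_not_affine {E : Type*} [NormedAddCommGroup E] [InnerProductSpace ℝ E]
    [CompleteSpace E] {s : Set E} {f : E → ℝ}
    (hf : ¬ ∃ (c : E) (b : ℝ), ∀ x ∈ s, f x = inner ℝ c x + b) (L : E →L[ℝ] ℝ) (x₀ : E) (y : ℝ) :
    ∃ x ∈ s, f x ≠ y + L (x - x₀) := by
  by_contra! h
  refine hf ⟨(InnerProductSpace.toDual ℝ E).symm L, y - L x₀, fun x hx => ?_⟩
  rw [h x hx, InnerProductSpace.toDual_symm_apply, map_sub]
  ring

theorem uIcc_subset_image_tangent_eval {g g' : ℝ → ℝ} {a b : ℝ} (hab : a ≤ b)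
    (hg : ∀ s ∈ Icc a b, HasDerivAt g (g' s) s) :
    uIcc (g a + (b - a) * g' a) (g b) ⊆ (fun s => g s + (b - s) * g' s) '' Icc a b := by
  have hgc : ContinuousOn g (Icc a b) := fun s hs => (hg s hs).continuousAt.continuousWithinAt
  have hprim : ∀ s ∈ Icc a b, HasDerivWithinAt (fun s => 2 * (∫ u in a..s, g u) + (b - s) * g s)
      (g s + (b - s) * g' s) (Icc a b) s := by
    intro s hs
    have : Fact (s ∈ Icc a b) := ⟨hs⟩
    have hint : HasDerivWithinAt (fun s => ∫ u in a..s, g u) (g s) (Icc a b) s :=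
      intervalIntegral.integral_hasDerivWithinAt_right
        (hgc.mono (uIcc_subset_Icc (left_mem_Icc.2 hab) hs)).intervalIntegrable
        (hgc.stronglyMeasurableAtFilter_nhdsWithin measurableSet_Icc s) (hgc s hs)
    refine ((hint.const_mul 2).add
      (((hasDerivWithinAt_id s _).const_sub b).mul (hg s hs).hasDerivWithinAt)).congr_deriv ?_
    simp only [id]
    ring
  rw [show g b = g b + (b - b) * g' b by simp]
  exact (ordConnected_Icc.image_hasDerivWithinAt hprim).uIcc_subset
    (mem_image_of_mem _ (left_mem_Icc.2 hab)) (mem_image_of_mem _ (right_mem_Icc.2 hab))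

theorem uIcc_subset_image_tangent_eval_segment {E : Type*} [NormedAddCommGroup E]
    [NormedSpace ℝ E] {f : E → ℝ} {Df : E → E →L[ℝ] ℝ} {x₀ a : E}
    (hf : ∀ x ∈ segment ℝ x₀ a, HasFDerivAt f (Df x) x) :
    uIcc (f x₀ + Df x₀ (a - x₀)) (f a) ⊆ (fun x => f x + Df x (a - x)) '' segment ℝ x₀ a := by
  set γ : ℝ → E := fun s => x₀ + s • (a - x₀)
  have hγ : ∀ s ∈ Icc (0 : ℝ) 1, γ s ∈ segment ℝ x₀ a := fun s hs =>
    segment_eq_image' ℝ x₀ a ▸ mem_image_of_mem γ hs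
  have hg : ∀ s ∈ Icc (0 : ℝ) 1, HasDerivAt (f ∘ γ) (Df (γ s) (a - x₀)) s := fun s hs => by
    simpa using (hf _ (hγ s hs)).comp_hasDerivAt s
      (((hasDerivAt_id s).smul_const (a - x₀)).const_add x₀)
  intro t ht
  obtain ⟨s, hs, rfl⟩ := uIcc_subset_image_tangent_eval zero_le_one hg (by simpa [γ] using ht)
  refine ⟨γ s, hγ s hs, ?_⟩
  have hsub : a - γ s = (1 - s) • (a - x₀) := by
    simp only [γ, sub_smul, one_smul]
    abel
  simp [hsub]

theorem stmt_10_general (n : ℕ) (f : EuclideanSpace ℝ (Fin n) → ℝ)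
    (Df : EuclideanSpace ℝ (Fin n) → (EuclideanSpace ℝ (Fin n) →L[ℝ] ℝ))
    (hf : ∀ x ∈ Icube n, HasFDerivAt f (Df x) x)
    (hnonaff : ¬ ∃ (c : EuclideanSpace ℝ (Fin n)) (b : ℝ),
      ∀ x ∈ Icube n, f x = (inner ℝ c x : ℝ) + b) :
    (interior {p : EuclideanSpace ℝ (Fin n) × ℝ |
        ∃ x ∈ Icube n, ∃ a : EuclideanSpace ℝ (Fin n),
          p = (a, f x + Df x (a - x))}).Nonempty := by
  set A : EuclideanSpace ℝ (Fin n) → ℝ := fun a => f 0 + Df 0 (a - 0)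
  obtain ⟨x₁, hx₁, hne⟩ := exists_ne_of_not_affine hnonaff (Df 0) 0 (f 0)
  obtain ⟨t, ht⟩ := nonempty_uIoo.2 hne.symm
  have hfc : ContinuousOn f (Icube n) := fun x hx => (hf x hx).continuousAt.continuousWithinAt
  have hAc : ContinuousOn A (Icube n) := by fun_prop
  refine ⟨(x₁, t), interior_maximal ?_
    (isOpen_regionBetween (isOpen_Icube n) (hAc.inf hfc) (hAc.sup hfc)) ⟨hx₁, ht⟩⟩
  rintro ⟨a, y⟩ ⟨ha, hay⟩
  have hseg := (convex_Icube n).segment_subset (zero_mem_Icube n) ha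
  obtain ⟨x, hx, hxt⟩ := uIcc_subset_image_tangent_eval_segment (fun x hx => hf x (hseg hx))
    (uIoo_subset_uIcc_self hay)
  exact ⟨x, hseg hx, a, Prod.ext rfl hxt.symm⟩

/-- if f : I^n → ℝ is differentiable everywhere on I^n and not affine,
then the union of the affine tangent hyperplanes of its graph has nonempty interior. -/
theorem stmt_10 (n : ℕ) (hn : 1 ≤ n) (f : EuclideanSpace ℝ (Fin n) → ℝ)
    (Df : EuclideanSpace ℝ (Fin n) → (EuclideanSpace ℝ (Fin n) →L[ℝ] ℝ))
    (hf : ∀ x ∈ Icube n, HasFDerivAt f (Df x) x)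
    (hnonaff : ¬ ∃ (c : EuclideanSpace ℝ (Fin n)) (b : ℝ),
      ∀ x ∈ Icube n, f x = (inner ℝ c x : ℝ) + b) :
    (interior {p : EuclideanSpace ℝ (Fin n) × ℝ |
        ∃ x ∈ Icube n, ∃ a : EuclideanSpace ℝ (Fin n),
          p = (a, f x + Df x (a - x))}).Nonempty :=
  stmt_10_general n f Df hf hnonaff
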